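/- arXiv:1405.4929 — 2 statements merged into one kernel-verified Lean document; each statement's English description precedes it below -/
import Mathlib

section
/- For every topological space X and point x ∈ X, Gruenhage's game G^c_{O,P}(X,x) and the game G_1(Ω_x, Ω_x) are dual games: ONE has a winning strategy in G^c_{O,P}(X,x) if and only if TWO has a winning strategy in G_1(Ω_x, Ω_x), and TWO has a winning strategy in G^c_{O,P}(X,x) if and only if ONE has a winning strategy in G_1(Ω_x, Ω_x). -/
open Set

/-- `GDom R` is the set of dominating families of the relation `R`:
sets `Z ⊆ B` such that every `a ∈ A` is dominated by some `b ∈ Z`. -/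
def GDom {α β : Type*} (R : α → β → Prop) : Set (Set β) :=
  {Z | ∀ a : α, ∃ b ∈ Z, R a b}

/-- A relation is total: every element of the domain is dominated by something. -/
def IsTotalRel {α β : Type*} (R : α → β → Prop) : Prop :=
  ∀ a : α, ∃ b : β, R a b

/-- The product of two relations. -/
def GProd {α β α' β' : Type*} (R : α → β → Prop) (R' : α' → β' → Prop) :
    α × α' → β × β' → Prop :=
  fun a b => R a.1 b.1 ∧ R' a.2 b.2

/-- The finite history consisting of the first `n` moves of the sequence `b`. -/
def GHist {β : Type*} (b : ℕ → β) (n : ℕ) : List β :=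
  List.ofFn fun i : Fin n => b i

/-- ONE has a winning strategy in the game `G(P,Q)`: in inning `n` ONE plays `aₙ ∈ A`,
TWO answers `bₙ` with `R aₙ bₙ`; ONE wins iff `{bₙ : n} ∈ GDom T`. -/
def OneWinsG {α β γ : Type*} (R : α → β → Prop) (T : γ → β → Prop) : Prop :=
  ∃ σ : List β → α, ∀ b : ℕ → β,
    (∀ n, R (σ (GHist b n)) (b n)) → Set.range b ∈ GDom T

/-- TWO has a winning strategy in the game `G(P,Q)`. -/
def TwoWinsG {α β γ : Type*} (R : α → β → Prop) (T : γ → β → Prop) : Prop :=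
  ∃ τ : List α → β, ∀ a : ℕ → α,
    (∀ n, R (a n) (τ (GHist a (n + 1)))) ∧
    Set.range (fun n => τ (GHist a (n + 1))) ∉ GDom T

/-- ONE has a winning strategy in the game `G₁(𝒜,ℬ)`: in inning `n` ONE plays `Aₙ ∈ 𝒜`,
TWO answers `bₙ ∈ Aₙ`; TWO wins iff `{bₙ : n} ∈ ℬ`. -/
def OneWinsG1 {β : Type*} (𝒜 ℬ : Set (Set β)) : Prop :=
  ∃ σ : List β → Set β, (∀ h, σ h ∈ 𝒜) ∧
    ∀ b : ℕ → β, (∀ n, b n ∈ σ (GHist b n)) → Set.range b ∉ ℬ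

/-- TWO has a winning strategy in the game `G₁(𝒜,ℬ)`. -/
def TwoWinsG1 {β : Type*} (𝒜 ℬ : Set (Set β)) : Prop :=
  ∃ τ : List (Set β) → β, ∀ S : ℕ → Set β, (∀ n, S n ∈ 𝒜) →
    (∀ n, τ (GHist S (n + 1)) ∈ S n) ∧
    Set.range (fun n => τ (GHist S (n + 1))) ∈ ℬ

/-- TWO has a winning strategy in the game `G_fin(𝒜,ℬ)`: in inning `n` ONE plays `Aₙ ∈ 𝒜`,
TWO answers a finite `Fₙ ⊆ Aₙ`; TWO wins iff `⋃ₙ Fₙ ∈ ℬ`. -/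
def TwoWinsGfin {β : Type*} (𝒜 ℬ : Set (Set β)) : Prop :=
  ∃ τ : List (Set β) → Set β, ∀ S : ℕ → Set β, (∀ n, S n ∈ 𝒜) →
    (∀ n, τ (GHist S (n + 1)) ⊆ S n ∧ (τ (GHist S (n + 1))).Finite) ∧
    (⋃ n, τ (GHist S (n + 1))) ∈ ℬ

/-- `(𝒜,ℬ)`-Lindelöf: every member of `𝒜` has a countable subset belonging to `ℬ`. -/
def LindelofFam {β : Type*} (𝒜 ℬ : Set (Set β)) : Prop :=
  ∀ S ∈ 𝒜, ∃ C ⊆ S, C.Countable ∧ C ∈ ℬ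

/-- The selection principle `S₁(𝒜,ℬ)`. -/
def SelS1 {β : Type*} (𝒜 ℬ : Set (Set β)) : Prop :=
  ∀ A : ℕ → Set β, (∀ n, A n ∈ 𝒜) →
    ∃ b : ℕ → β, (∀ n, b n ∈ A n) ∧ Set.range b ∈ ℬ

/-- The selection principle `S_fin(𝒜,ℬ)`. -/
def SelSfin {β : Type*} (𝒜 ℬ : Set (Set β)) : Prop :=
  ∀ A : ℕ → Set β, (∀ n, A n ∈ 𝒜) →
    ∃ F : ℕ → Set β, (∀ n, F n ⊆ A n ∧ (F n).Finite) ∧ (⋃ n, F n) ∈ ℬ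

/-- `𝒪_X`: the family of open covers of `X`. -/
def OpenCovers (X : Type*) [TopologicalSpace X] : Set (Set (Set X)) :=
  {𝒰 | (∀ U ∈ 𝒰, IsOpen U) ∧ ⋃₀ 𝒰 = Set.univ}

/-- ONE has a winning strategy in the point-open game on `X`. -/
def OneWinsPointOpen (X : Type*) [TopologicalSpace X] : Prop :=
  ∃ σ : List (Set X) → X, ∀ U : ℕ → Set X,
    (∀ n, IsOpen (U n) ∧ σ (GHist U n) ∈ U n) → Set.range U ∈ OpenCovers X

/-- TWO has a winning strategy in the point-open game on `X`. -/
def TwoWinsPointOpen (X : Type*) [TopologicalSpace X] : Prop :=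
  ∃ τ : List X → Set X, ∀ x : ℕ → X,
    (∀ n, IsOpen (τ (GHist x (n + 1))) ∧ x n ∈ τ (GHist x (n + 1))) ∧
    Set.range (fun n => τ (GHist x (n + 1))) ∉ OpenCovers X

/-- `𝔇_X`: the family of dense subsets of `X`. -/
def DenseSets (X : Type*) [TopologicalSpace X] : Set (Set X) :=
  {D | Dense D}

/-- ONE has a winning strategy in the point-picking game `G^D_ω(X)` of Berner and Juhász. -/
def OneWinsPointPicking (X : Type*) [TopologicalSpace X] : Prop :=
  ∃ σ : List X → Set X, (∀ h, IsOpen (σ h) ∧ (σ h).Nonempty) ∧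
    ∀ x : ℕ → X, (∀ n, x n ∈ σ (GHist x n)) → Dense (Set.range x)

/-- TWO has a winning strategy in the point-picking game `G^D_ω(X)`. -/
def TwoWinsPointPicking (X : Type*) [TopologicalSpace X] : Prop :=
  ∃ τ : List (Set X) → X, ∀ U : ℕ → Set X,
    (∀ n, IsOpen (U n) ∧ (U n).Nonempty) →
    (∀ n, τ (GHist U (n + 1)) ∈ U n) ∧
    ¬ Dense (Set.range fun n => τ (GHist U (n + 1)))

/-- `𝒟_X`: families of open sets whose union is dense in `X`. -/
def DenseUnionFams (X : Type*) [TopologicalSpace X] : Set (Set (Set X)) :=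
  {𝒰 | (∀ U ∈ 𝒰, IsOpen U) ∧ Dense (⋃₀ 𝒰)}

/-- ONE has a winning strategy in Tkachuk's game `θ(X)`. -/
def OneWinsTheta (X : Type*) [TopologicalSpace X] : Prop :=
  ∃ σ : List (Set X) → X, ∀ U : ℕ → Set X,
    (∀ n, IsOpen (U n) ∧ σ (GHist U n) ∈ U n) → Dense (⋃ n, U n)

/-- TWO has a winning strategy in Tkachuk's game `θ(X)`. -/
def TwoWinsTheta (X : Type*) [TopologicalSpace X] : Prop :=
  ∃ τ : List X → Set X, ∀ x : ℕ → X,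
    (∀ n, IsOpen (τ (GHist x (n + 1))) ∧ x n ∈ τ (GHist x (n + 1))) ∧
    ¬ Dense (⋃ n, τ (GHist x (n + 1)))

/-- `Ω_x`: the family of subsets of `X` having `x` in their closure. -/
def OmegaPt {X : Type*} [TopologicalSpace X] (x : X) : Set (Set X) :=
  {A | x ∈ closure A}

/-- ONE has a winning strategy in Gruenhage's game `G^c_{O,P}(X,x)`. -/
def OneWinsGruenhage {X : Type*} [TopologicalSpace X] (x : X) : Prop :=
  ∃ σ : List X → Set X, (∀ h, IsOpen (σ h) ∧ x ∈ σ h) ∧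
    ∀ y : ℕ → X, (∀ n, y n ∈ σ (GHist y n)) → x ∈ closure (Set.range y)

/-- TWO has a winning strategy in Gruenhage's game `G^c_{O,P}(X,x)`. -/
def TwoWinsGruenhage {X : Type*} [TopologicalSpace X] (x : X) : Prop :=
  ∃ τ : List (Set X) → X, ∀ V : ℕ → Set X,
    (∀ n, IsOpen (V n) ∧ x ∈ V n) →
    (∀ n, τ (GHist V (n + 1)) ∈ V n) ∧
    x ∉ closure (Set.range fun n => τ (GHist V (n + 1)))

/-- ONE has a winning strategy in the compact-open game on `X`. -/
def OneWinsCompactOpen (X : Type*) [TopologicalSpace X] : Prop :=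
  ∃ σ : List (Set X) → Set X, (∀ h, IsCompact (σ h)) ∧
    ∀ U : ℕ → Set X, (∀ n, IsOpen (U n) ∧ σ (GHist U n) ⊆ U n) →
      (⋃ n, U n) = Set.univ

/-- `⪯` is downwards `P`-compatible. -/
def DownwardsCompat {α β : Type*} (R : α → β → Prop) (le : β → β → Prop) : Prop :=
  ∀ a b₁ b₂, R a b₁ → R a b₂ → ∃ b, R a b ∧ le b b₁ ∧ le b b₂

/-- `⪯` is upwards `Q`-compatible. -/
def UpwardsCompat {γ β : Type*} (T : γ → β → Prop) (le : β → β → Prop) : Prop :=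
  ∀ c b₁ b₂, T c b₁ → le b₁ b₂ → T c b₂

/-- `⪯` is countably downwards `P`-compatible. -/
def CountablyDownwardsCompat {α β : Type*} (R : α → β → Prop) (le : β → β → Prop) : Prop :=
  ∀ a, ∀ E : Set β, E.Countable → E.Nonempty → (∀ b ∈ E, R a b) →
    ∃ b', R a b' ∧ ∀ b ∈ E, le b' b

/-- A relation is `ℵ₀`-preserving if some partial order on `B` is both upwards
compatible and countably downwards compatible with it. -/
def Aleph0Preserving {α β : Type*} (R : α → β → Prop) : Prop :=
  ∃ le : β → β → Prop, IsPartialOrder β le ∧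
    UpwardsCompat R le ∧ CountablyDownwardsCompat R le

/-- `Dom_γ(T)`: the γ-dominating sequences of the relation `T`. -/
def GDomGamma {γ β : Type*} (T : γ → β → Prop) : Set (ℕ → β) :=
  {z | ∀ c : γ, {n : ℕ | ¬ T c (z n)}.Finite}

/-- ONE has a winning strategy in the game `G_γ(P,Q)`. -/
def OneWinsGgamma {α β γ : Type*} (R : α → β → Prop) (T : γ → β → Prop) : Prop :=
  ∃ σ : List β → α, ∀ b : ℕ → β,
    (∀ n, R (σ (GHist b n)) (b n)) → b ∈ GDomGamma T

/-- TWO has a winning strategy in the game `G_γ(P,Q)`. -/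
def TwoWinsGgamma {α β γ : Type*} (R : α → β → Prop) (T : γ → β → Prop) : Prop :=
  ∃ τ : List α → β, ∀ a : ℕ → α,
    (∀ n, R (a n) (τ (GHist a (n + 1)))) ∧
    (fun n => τ (GHist a (n + 1))) ∉ GDomGamma T

/-- ONE has a winning strategy in the game `G₁(𝒜, Dom_γ(T))`. -/
def OneWinsG1gamma {β γ : Type*} (𝒜 : Set (Set β)) (T : γ → β → Prop) : Prop :=
  ∃ σ : List β → Set β, (∀ h, σ h ∈ 𝒜) ∧
    ∀ b : ℕ → β, (∀ n, b n ∈ σ (GHist b n)) → b ∉ GDomGamma T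

/-- TWO has a winning strategy in the game `G₁(𝒜, Dom_γ(T))`. -/
def TwoWinsG1gamma {β γ : Type*} (𝒜 : Set (Set β)) (T : γ → β → Prop) : Prop :=
  ∃ τ : List (Set β) → β, ∀ S : ℕ → Set β, (∀ n, S n ∈ 𝒜) →
    (∀ n, τ (GHist S (n + 1)) ∈ S n) ∧
    (fun n => τ (GHist S (n + 1))) ∈ GDomGamma T

/-- The `ℵ₀`-modification of a relation: moves become nonempty countable subsets of `B`,
dominated pointwise. -/
def CountMod {α β : Type*} (R : α → β → Prop) :
    α → {E : Set β // E.Countable ∧ E.Nonempty} → Prop :=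
  fun a E => ∀ b ∈ E.1, R a b

/-!
Gruenhage's game is `G₁(τ_x, ¬Ω_x)`, and `Ω_x` consists exactly of the sets meeting every member
of `τ_x`. For any such pair `𝒱`, `𝒜` the games `G₁(𝒜, ℬ)` and `G₁(𝒱, ¬ℬ)` are dual. A winning
strategy `σ` for ONE in one game gives TWO one in the other: answer each move `C` by a point of
`C ∩ σ(earlier points)`, nonempty because moves of the two games always meet. From a winning
strategy `τ` for TWO, ONE plays a move contained in the set of all answers `τ` could give next
(this set meets every legal move of `τ`'s game); each point TWO picks there is `τ`'s answer to
some legal move, so TWO's points are those of a play following `τ`, which `τ` wins.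
-/

section ReplyStrategy

variable {α β : Type*}

theorem gHist_succ (b : ℕ → β) (n : ℕ) : GHist b (n + 1) = GHist b n ++ [b n] := by
  rw [GHist, List.ofFn_succ', List.concat_eq_append]
  rfl

theorem gHist_getD_length (L : List β) (d : β) :
    GHist (fun k => L.getD k d) L.length = L := by
  apply List.ext_getElem <;> simp [GHist]

def replyHistory (f : List β → α → β) (L : List α) : List β :=
  L.foldl (fun replies a => replies ++ [f replies a]) []

def replySeq (f : List β → α → β) (a : ℕ → α) (n : ℕ) : β :=
  f (replyHistory f (GHist a n)) (a n)

theorem replyHistory_append_singleton (f : List β → α → β) (L : List α) (a : α) :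
    replyHistory f (L ++ [a]) = replyHistory f L ++ [f (replyHistory f L) a] := by
  simp [replyHistory]

theorem replyHistory_gHist (f : List β → α → β) (a : ℕ → α) (n : ℕ) :
    replyHistory f (GHist a n) = GHist (replySeq f a) n := by
  induction n with
  | zero => rfl
  | succ n ih => rw [gHist_succ, replyHistory_append_singleton, gHist_succ, ← ih]; rfl

theorem replySeq_eq (f : List β → α → β) (a : ℕ → α) (n : ℕ) :
    replySeq f a n = f (GHist (replySeq f a) n) (a n) := by
  rw [← replyHistory_gHist]; rfl

theorem getLastD_replyHistory_gHist_succ (f : List β → α → β) (a : ℕ → α) (n : ℕ) (d : β) :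
    (replyHistory f (GHist a (n + 1))).getLastD d = replySeq f a n := by
  rw [replyHistory_gHist, gHist_succ, List.getLastD_concat]

theorem forall_mem_replyHistory {f : List β → α → β} {s : Set β} (hf : ∀ p a, f p a ∈ s)
    (L : List α) : ∀ b ∈ replyHistory f L, b ∈ s := by
  induction L using List.reverseRecOn with
  | nil => simp [replyHistory]
  | append_singleton L a ih =>
    rw [replyHistory_append_singleton]
    simpa [or_imp, forall_and] using ⟨ih, hf _ a⟩

end ReplyStrategy

section DualGames

variable {β : Type*} {𝒞 𝒞' 𝒟 : Set (Set β)}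

theorem mem_of_forall_mem_history {τ : List (Set β) → β}
    (hτ : ∀ S : ℕ → Set β, (∀ n, S n ∈ 𝒞) → ∀ n, τ (GHist S (n + 1)) ∈ S n)
    {p : List (Set β)} (hp : ∀ C ∈ p, C ∈ 𝒞) {C : Set β} (hC : C ∈ 𝒞) :
    τ (p ++ [C]) ∈ C := by
  -- extend the finite history to a legal play by repeating `C`
  let S : ℕ → Set β := fun k => (p ++ [C]).getD k C
  have hS : ∀ n, S n ∈ 𝒞 := by
    intro n
    simp only [S, List.getD_eq_getElem?_getD]
    cases h : (p ++ [C])[n]? with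
    | none => exact hC
    | some D =>
      rcases List.mem_append.1 (List.mem_of_getElem? h) with hD | hD
      · exact hp D hD
      · rwa [List.mem_singleton.1 hD]
  have hplay := hτ S hS p.length
  have hhist : GHist S (p.length + 1) = p ++ [C] := by
    have := gHist_getD_length (p ++ [C]) C
    rwa [List.length_append, List.length_singleton] at this
  rwa [hhist, show S p.length = C by simp [S]] at hplay

theorem twoWinsG1_compl_of_oneWinsG1 [Nonempty β]
    (hmeet : ∀ C ∈ 𝒞, ∀ C' ∈ 𝒞', (C ∩ C').Nonempty) (h : OneWinsG1 𝒞' 𝒟) :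
    TwoWinsG1 𝒞 𝒟ᶜ := by
  obtain ⟨σ, hσ, hwin⟩ := h
  let pick : List β → Set β → β := fun p C => Classical.epsilon (· ∈ C ∩ σ p)
  refine ⟨fun L => (replyHistory pick L).getLastD (Classical.arbitrary β), fun S hS => ?_⟩
  simp only [getLastD_replyHistory_gHist_succ]
  have hpick : ∀ n, replySeq pick S n ∈ S n ∩ σ (GHist (replySeq pick S) n) := fun n => by
    rw [replySeq_eq]
    exact Classical.epsilon_spec (hmeet _ (hS n) _ (hσ _))
  exact ⟨fun n => (hpick n).1, hwin _ fun n => (hpick n).2⟩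

theorem oneWinsG1_compl_of_twoWinsG1 (h𝒞 : 𝒞.Nonempty)
    (hcover : ∀ T : Set β, (∀ C ∈ 𝒞, (T ∩ C).Nonempty) → ∃ C' ∈ 𝒞', C' ⊆ T)
    (h : TwoWinsG1 𝒞 𝒟) : OneWinsG1 𝒞' 𝒟ᶜ := by
  classical
  obtain ⟨τ, hτ⟩ := h
  obtain ⟨C₀, hC₀⟩ := h𝒞
  let answers : List (Set β) → Set β := fun p => (fun C => τ (p ++ [C])) '' 𝒞
  let recover : List (Set β) → β → Set β := fun p b =>
    if hb : b ∈ answers p then hb.choose else C₀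
  have hrecover : ∀ p b, recover p b ∈ 𝒞 := fun p b => by
    simp only [recover]; split_ifs with hb
    exacts [hb.choose_spec.1, hC₀]
  have hsel : ∀ q : List β, ∃ C' ∈ 𝒞', C' ⊆ answers (replyHistory recover q) := fun q =>
    hcover _ fun C hC => ⟨_, ⟨C, hC, rfl⟩,
      mem_of_forall_mem_history (fun S hS => (hτ S hS).1) (forall_mem_replyHistory hrecover q) hC⟩
  choose σ hσ hσsub using hsel
  refine ⟨σ, hσ, fun y hy => ?_⟩
  set S := replySeq recover y
  have hreplay : ∀ n, S n ∈ 𝒞 ∧ τ (GHist S (n + 1)) = y n := fun n => by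
    have hans : y n ∈ answers (GHist S n) := by
      rw [← replyHistory_gHist]; exact hσsub _ (hy n)
    have hSn : S n = hans.choose := (replySeq_eq recover y n).trans (dif_pos hans)
    rw [gHist_succ, hSn]
    exact hans.choose_spec
  have hwin := (hτ S fun n => (hreplay n).1).2
  rw [show (fun n => τ (GHist S (n + 1))) = y from funext fun n => (hreplay n).2] at hwin
  exact not_not_intro hwin

theorem g1_dual_of_forall_mem_iff [Nonempty β] {𝒜 𝒱 ℬ : Set (Set β)}
    (h𝒜 : ∀ A, A ∈ 𝒜 ↔ ∀ V ∈ 𝒱, (A ∩ V).Nonempty) (h𝒜ne : 𝒜.Nonempty) (h𝒱ne : 𝒱.Nonempty) :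
    (OneWinsG1 𝒱 ℬᶜ ↔ TwoWinsG1 𝒜 ℬ) ∧ (TwoWinsG1 𝒱 ℬᶜ ↔ OneWinsG1 𝒜 ℬ) := by
  have hmeet : ∀ A ∈ 𝒜, ∀ V ∈ 𝒱, (A ∩ V).Nonempty := fun A hA => (h𝒜 A).1 hA
  have hcover𝒱 : ∀ T : Set β, (∀ A ∈ 𝒜, (T ∩ A).Nonempty) → ∃ V ∈ 𝒱, V ⊆ T := by
    intro T hT
    by_contra! h
    have hTc : Tᶜ ∈ 𝒜 := (h𝒜 _).2 fun V hV =>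
      let ⟨b, hbV, hbT⟩ := not_subset.1 (h V hV)
      ⟨b, hbT, hbV⟩
    simpa using hT _ hTc
  have hcover𝒜 : ∀ T : Set β, (∀ V ∈ 𝒱, (T ∩ V).Nonempty) → ∃ A ∈ 𝒜, A ⊆ T :=
    fun T hT => ⟨T, (h𝒜 T).2 hT, subset_rfl⟩
  refine ⟨⟨fun h => ?_, oneWinsG1_compl_of_twoWinsG1 h𝒜ne hcover𝒱⟩,
    ⟨fun h => ?_, twoWinsG1_compl_of_oneWinsG1 fun V hV A hA => inter_comm A V ▸ hmeet A hA V hV⟩⟩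
  · simpa using twoWinsG1_compl_of_oneWinsG1 hmeet h
  · simpa using oneWinsG1_compl_of_twoWinsG1 h𝒱ne hcover𝒜 h

end DualGames

theorem mem_omegaPt_iff_forall_inter_nonempty {X : Type*} [TopologicalSpace X] (x : X) (A : Set X) :
    A ∈ OmegaPt x ↔ ∀ V ∈ {V : Set X | IsOpen V ∧ x ∈ V}, (A ∩ V).Nonempty := by
  simp only [OmegaPt, mem_ofPred_eq, mem_closure_iff, inter_comm A, and_imp]

/-- Gruenhage's game `G^c_{O,P}(X,x)` and the game `G₁(Ω_x, Ω_x)`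
are dual games. -/
theorem statement4 (X : Type*) [TopologicalSpace X] (x : X) :
    (OneWinsGruenhage x ↔ TwoWinsG1 (OmegaPt x) (OmegaPt x)) ∧
    (TwoWinsGruenhage x ↔ OneWinsG1 (OmegaPt x) (OmegaPt x)) := by
  have : Nonempty X := ⟨x⟩
  have hone : OneWinsGruenhage x ↔ OneWinsG1 {V : Set X | IsOpen V ∧ x ∈ V} (OmegaPt x)ᶜ := by
    simp only [OneWinsGruenhage, OneWinsG1, OmegaPt, mem_compl_iff, mem_ofPred_eq, not_not]
  obtain ⟨hdual₁, hdual₂⟩ := g1_dual_of_forall_mem_iff (ℬ := OmegaPt x)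
    (mem_omegaPt_iff_forall_inter_nonempty x) ⟨univ, by simp [OmegaPt]⟩ ⟨univ, isOpen_univ, mem_univ x⟩
  exact ⟨hone.trans hdual₁, hdual₂⟩
end

section
/- Let P = (A,B,R), P' = (A',B',R'), Q = (C,B,T) and Q' = (C',B',T') be relations. If ONE has a winning strategy in the game G(P',Q') and (Dom(P), Dom(Q))-Lindelöf holds, then (Dom(P⊗P'), Dom(Q⊗Q'))-Lindelöf holds. -/
open Set

lemma GHist_succ' {β : Type*} (b : ℕ → β) (n : ℕ) :
    GHist b (n + 1) = GHist b n ++ [b n] := by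
  show List.ofFn (fun i : Fin (n + 1) => b i) = _
  rw [List.ofFn_succ']
  simp [GHist, List.concat_eq_append, Fin.last]

/-- If ONE has a winning strategy in `G(P',Q')` and
`(Dom(P), Dom(Q))`-Lindelöf holds, then `(Dom(P⊗P'), Dom(Q⊗Q'))`-Lindelöf holds. -/
theorem statement5 {α β γ α' β' γ' : Type*}
    [Nonempty α] [Nonempty γ] [Nonempty α'] [Nonempty γ']
    (R : α → β → Prop) (T : γ → β → Prop)
    (R' : α' → β' → Prop) (T' : γ' → β' → Prop)
    (hR : IsTotalRel R) (hT : IsTotalRel T)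
    (hR' : IsTotalRel R') (hT' : IsTotalRel T')
    (hwin : OneWinsG R' T')
    (hLin : LindelofFam (GDom R) (GDom T)) :
    LindelofFam (GDom (GProd R R')) (GDom (GProd T T')) := by
  classical
  obtain ⟨σ, hσ⟩ := hwin
  have hβ' : Nonempty β' := ⟨(hR' (Classical.arbitrary α')).choose⟩
  intro S hS
  -- For each history s, the set of b ∈ β that can be paired into S with a response to σ s
  set Zs : List β' → Set β := fun s => {b | ∃ b', (b, b') ∈ S ∧ R' (σ s) b'} with hZsdef
  have hZs : ∀ s, Zs s ∈ GDom R := by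
    intro s a
    obtain ⟨q, hq, hq2⟩ := hS (a, σ s)
    exact ⟨q.1, ⟨q.2, by simpa using hq, hq2.2⟩, hq2.1⟩
  choose C hC1 hC2 hC3 using fun s => hLin (Zs s) (hZs s)
  -- choose responses g s b for b ∈ C s
  have hgex : ∀ s : List β', ∀ b : β, ∃ b' : β',
      b ∈ C s → (b, b') ∈ S ∧ R' (σ s) b' := by
    intro s b
    by_cases h : b ∈ C s
    · obtain ⟨b', hb'⟩ := hC1 s h
      exact ⟨b', fun _ => hb'⟩
    · exact ⟨Classical.arbitrary β', fun h' => absurd h' h⟩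
  choose g hg using hgex
  -- the countable tree of reachable histories
  let H : ℕ → Set (List β') := fun n =>
    Nat.rec ({([] : List β')} : Set (List β'))
      (fun _ Hn => ⋃ s ∈ Hn, (fun b => s ++ [g s b]) '' C s) n
  have hH0 : H 0 = {([] : List β')} := rfl
  have hHsucc : ∀ n, H (n + 1) = ⋃ s ∈ H n, (fun b => s ++ [g s b]) '' C s :=
    fun n => rfl
  have hHc : ∀ n, (H n).Countable := by
    intro n
    induction n with
    | zero => exact Set.countable_singleton _
    | succ n ih =>
      rw [hHsucc]
      exact ih.biUnion fun s _ => (hC2 s).image _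
  -- the candidate countable subset
  refine ⟨⋃ s ∈ ⋃ n, H n, (fun b => (b, g s b)) '' C s, ?_, ?_, ?_⟩
  · intro p hp
    simp only [Set.mem_iUnion, Set.mem_image] at hp
    obtain ⟨s, ⟨n, hs⟩, b, hb, rfl⟩ := hp
    exact (hg s b hb).1
  · exact (Set.countable_iUnion hHc).biUnion fun s _ => ((hC2 s).image _)
  · intro cc
    by_contra hcon
    push_neg at hcon
    -- play the game against σ
    choose p hp1 hp2 using fun s => hC3 s cc.1
    let s : ℕ → List β' := fun n =>
      Nat.rec ([] : List β') (fun _ sn => sn ++ [g sn (p sn)]) n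
    have hssucc : ∀ n, s (n + 1) = s n ++ [g (s n) (p (s n))] := fun n => rfl
    set b' : ℕ → β' := fun n => g (s n) (p (s n)) with hb'def
    have hsH : ∀ n, s n ∈ H n := by
      intro n
      induction n with
      | zero => exact Set.mem_singleton _
      | succ n ih =>
        rw [hHsucc]
        exact Set.mem_biUnion ih ⟨p (s n), hp1 (s n), rfl⟩
    have hHist : ∀ n, GHist b' n = s n := by
      intro n
      induction n with
      | zero => simp [GHist]; rfl
      | succ n ih => rw [GHist_succ', ih]
    have hplay : ∀ n, R' (σ (GHist b' n)) (b' n) := by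
      intro n
      rw [hHist n]
      exact (hg (s n) _ (hp1 (s n))).2
    obtain ⟨x, ⟨n, rfl⟩, hx⟩ := hσ b' hplay cc.2
    refine hcon (p (s n), b' n) ?_ ⟨hp2 (s n), hx⟩
    simp only [Set.mem_iUnion, Set.mem_image]
    exact ⟨s n, ⟨n, hsH n⟩, p (s n), hp1 (s n), rfl⟩
end
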